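/- The subspaces {W_H ⊗ (1_Q 1_Q^⊤) : W_H H-equivariant} and {I_P ⊗ W_K : W_K K-equivariant} of ℝ^{PQ×PQ} intersect exactly in the one-dimensional span of I_P ⊗ (1_Q 1_Q^⊤), assuming the spaces of H- and K-equivariant maps both contain the identity and the all-ones matrix (which holds when the actions are transitive permutation actions). -/

import Mathlib

/-! If `A ⊗ B = D ⊗ C` with `B ≠ 0`, comparing entries at a nonzero entry `B k k'` gives
`A = (C k k' / B k k') • D`. So a matrix of both forms `W_H ⊗ J` and `1 ⊗ W_K` has `W_H` a
multiple of the identity. Conversely, a scalar matrix commutes with everything, and a permutation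
matrix fixes the all-ones vector on both sides, hence commutes with `J`. -/

open Matrix Kronecker

/-- Permutation matrix of a permutation `σ`: entry `(i,j)` is 1 iff `σ j = i`. -/
noncomputable def permMat {n : Type*} [Fintype n] [DecidableEq n] (σ : Equiv.Perm n) :
    Matrix n n ℝ := Matrix.of fun i j => if σ j = i then (1 : ℝ) else 0

theorem Matrix.exists_smul_eq_of_kronecker_eq {K l m n p : Type*} [Field K]
    {A D : Matrix l m K} {B C : Matrix n p K} (hB : B ≠ 0) (h : A ⊗ₖ B = D ⊗ₖ C) :
    ∃ c : K, A = c • D := by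
  obtain ⟨k, k', hkk'⟩ : ∃ k k', B k k' ≠ 0 := by
    by_contra! hB0
    exact hB (Matrix.ext hB0)
  refine ⟨C k k' / B k k', Matrix.ext fun i j => ?_⟩
  have hij : A i j * B k k' = D i j * C k k' := congr_fun₂ h (i, k) (j, k')
  rw [smul_apply, smul_eq_mul, div_mul_eq_mul_div, eq_div_iff hkk', hij, mul_comm]

section permMat

variable {n : Type*} [Fintype n] [DecidableEq n]

theorem permMat_mulVec_const (σ : Equiv.Perm n) (a : ℝ) :
    permMat σ *ᵥ (fun _ => a) = fun _ => a := by
  ext i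
  simp [permMat, mulVec, dotProduct, ← Equiv.eq_symm_apply]

theorem const_vecMul_permMat (σ : Equiv.Perm n) (a : ℝ) :
    (fun _ => a) ᵥ* permMat σ = fun _ => a := by
  ext j
  simp [permMat, vecMul, dotProduct]

theorem commute_permMat_vecMulVec_const (σ : Equiv.Perm n) (a b : ℝ) :
    Commute (permMat σ) (vecMulVec (fun _ : n => a) (fun _ : n => b)) := by
  rw [commute_iff_eq, mul_vecMulVec, vecMulVec_mul, permMat_mulVec_const, const_vecMul_permMat]

end permMat

theorem outer_inner_intersection_general
    {H P K Q : Type*} [Group H] [Group K]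
    [Fintype P] [DecidableEq P] [Fintype Q] [DecidableEq Q] [Nonempty Q]
    (ρ : H →* Equiv.Perm P) (τ : K →* Equiv.Perm Q) :
    {M : Matrix (P × Q) (P × Q) ℝ |
        ∃ WH : Matrix P P ℝ, (∀ h : H, permMat (ρ h) * WH = WH * permMat (ρ h)) ∧
          M = WH ⊗ₖ vecMulVec (fun _ : Q => (1 : ℝ)) (fun _ : Q => (1 : ℝ))} ∩
      {M : Matrix (P × Q) (P × Q) ℝ |
        ∃ WK : Matrix Q Q ℝ, (∀ k : K, permMat (τ k) * WK = WK * permMat (τ k)) ∧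
          M = (1 : Matrix P P ℝ) ⊗ₖ WK} =
    {M : Matrix (P × Q) (P × Q) ℝ |
        ∃ c : ℝ, M = c • ((1 : Matrix P P ℝ) ⊗ₖ
          vecMulVec (fun _ : Q => (1 : ℝ)) (fun _ : Q => (1 : ℝ)))} := by
  set J := vecMulVec (fun _ : Q => (1 : ℝ)) (fun _ : Q => (1 : ℝ))
  ext M
  constructor
  · rintro ⟨⟨WH, -, rfl⟩, WK, -, hM⟩
    have hJ : J ≠ 0 := by simp [J, funext_iff]
    obtain ⟨c, rfl⟩ := exists_smul_eq_of_kronecker_eq hJ hM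
    exact ⟨c, smul_kronecker c 1 J⟩
  · rintro ⟨c, rfl⟩
    refine ⟨⟨c • 1, fun h => ((Commute.one_right _).smul_right c).eq,
        (smul_kronecker c 1 J).symm⟩,
      ⟨c • J, fun k => ((commute_permMat_vecMulVec_const _ 1 1).smul_right c).eq,
        (kronecker_smul c 1 J).symm⟩⟩

/-- The subspaces `{W_H ⊗ (1_Q 1_Q^⊤) : W_H H-equivariant}` and `{I_P ⊗ W_K : W_K K-equivariant}`
of `ℝ^{PQ×PQ}` intersect exactly in the one-dimensional span of `I_P ⊗ (1_Q 1_Q^⊤)`.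
(The identity is always `H`-equivariant and the all-ones matrix is always `K`-equivariant for
permutation actions.) -/
theorem outer_inner_intersection
    {H P K Q : Type*} [Group H] [Group K]
    [Fintype P] [DecidableEq P] [Nonempty P] [Fintype Q] [DecidableEq Q] [Nonempty Q]
    (ρ : H →* Equiv.Perm P) (τ : K →* Equiv.Perm Q) :
    {M : Matrix (P × Q) (P × Q) ℝ |
        ∃ WH : Matrix P P ℝ, (∀ h : H, permMat (ρ h) * WH = WH * permMat (ρ h)) ∧
          M = WH ⊗ₖ vecMulVec (fun _ : Q => (1 : ℝ)) (fun _ : Q => (1 : ℝ))} ∩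
      {M : Matrix (P × Q) (P × Q) ℝ |
        ∃ WK : Matrix Q Q ℝ, (∀ k : K, permMat (τ k) * WK = WK * permMat (τ k)) ∧
          M = (1 : Matrix P P ℝ) ⊗ₖ WK} =
    {M : Matrix (P × Q) (P × Q) ℝ |
        ∃ c : ℝ, M = c • ((1 : Matrix P P ℝ) ⊗ₖ
          vecMulVec (fun _ : Q => (1 : ℝ)) (fun _ : Q => (1 : ℝ)))} :=
  outer_inner_intersection_general ρ τ
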